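/- arXiv:math/0610891 — 2 statements merged into one kernel-verified Lean document; each statement's English description precedes it below -/
import Mathlib

section
/- Let ν be a finite Borel measure on ℝ, let s > 0, and let E ⊂ ℝ be a Borel set such that at ν-almost every point a ∈ E, limsup_{r→0} ν(B(a,r))/r^s = ∞, and suppose the restriction of H^s to E is absolutely continuous with respect to ν. Then H^s(E) = 0. -/
/-!
Fix `n`. At every point `a` of the set where the upper `s`-density is infinite there are
arbitrarily small radii `ρ` with `n ρ^s ≤ ν(B(a, ρ))`. A Vitali subfamily of these balls is
disjoint, and its fourfold enlargements cover the set with `∑ diam^s ≤ 8^s ∑ ρ^s ≤ 8^s ν(X) / n`.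
Hence `H^s` vanishes on that set; the remaining part of `E` is `ν`-null, so `H^s` vanishes there
by absolute continuity.
-/

open MeasureTheory Filter Set Metric
open scoped ENNReal

universe u

theorem exists_mem_Ioc_mul_rpow_le_of_limsup_eq_top {f : ℝ → ℝ≥0∞} {s : ℝ}
    (h : limsup (fun r : ℝ => f r / ENNReal.ofReal (r ^ s)) (nhdsWithin 0 (Ioi 0)) = ⊤)
    {C : ℝ≥0∞} (hC : C ≠ ⊤) {δ : ℝ} (hδ : 0 < δ) :
    ∃ ρ ∈ Ioc 0 δ, C * ENNReal.ofReal (ρ ^ s) ≤ f ρ := by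
  have hfreq := frequently_lt_of_lt_limsup (by isBoundedDefault) (h ▸ hC.lt_top)
  obtain ⟨ρ, hCρ, hρ⟩ := (hfreq.and_eventually (Ioc_mem_nhdsGT hδ)).exists
  exact ⟨ρ, hρ, (ENNReal.mul_lt_of_lt_div hCρ).le⟩

theorem hausdorffMeasure_le_of_forall_exists_cover {X : Type u} [EMetricSpace X]
    [MeasurableSpace X] [BorelSpace X] (d : ℝ) (A : Set X) (K : ℝ≥0∞)
    (h : ∀ δ : ℝ, 0 < δ → ∃ (ι : Type u) (_ : Countable ι) (t : ι → Set X),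
      (∀ i, ediam (t i) ≤ ENNReal.ofReal δ) ∧ A ⊆ ⋃ i, t i ∧ ∑' i, ediam (t i) ^ d ≤ K) :
    μH[d] A ≤ K := by
  choose ι hι t hdiam hcover hsum using fun n : ℕ => h (1 / (n + 1)) (by positivity)
  have hmesh : Tendsto (fun n : ℕ => ENNReal.ofReal (1 / (n + 1))) atTop (nhds 0) := by
    simpa using ENNReal.tendsto_ofReal tendsto_one_div_add_atTop_nhds_zero_nat
  calc μH[d] A ≤ liminf (fun n => ∑' i, ediam (t n i) ^ d) atTop :=
        Measure.hausdorffMeasure_le_liminf_tsum d A _ hmesh t (.of_forall hdiam)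
          (.of_forall hcover)
    _ ≤ K := liminf_le_of_frequently_le (.of_forall hsum) (by isBoundedDefault)

theorem ediam_closedBall_le {X : Type*} [PseudoMetricSpace X] (x : X) (r : ℝ) :
    ediam (closedBall x r) ≤ ENNReal.ofReal (2 * r) :=
  ediam_le_of_forall_dist_le fun y hy z hz =>
    (dist_triangle_right y z x).trans (by rw [two_mul]; exact add_le_add hy hz)

section Covering

variable {X : Type u} [MetricSpace X] [TopologicalSpace.SeparableSpace X]

theorem exists_countable_pairwiseDisjoint_closedBall_cover (A : Set X) (ρ : X → ℝ) {δ : ℝ}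
    (hρ : ∀ a ∈ A, ρ a ∈ Ioc 0 δ) :
    ∃ u ⊆ A, u.Countable ∧ u.PairwiseDisjoint (fun b => closedBall b (ρ b)) ∧
      A ⊆ ⋃ b ∈ u, closedBall b (4 * ρ b) := by
  obtain ⟨u, huA, hdisj, hcov⟩ := Vitali.exists_disjoint_subfamily_covering_enlargement_closedBall
    A id ρ δ (fun a ha => (hρ a ha).2) 4 (by norm_num)
  refine ⟨u, huA, hdisj.countable_of_nonempty_interior fun b hb => ?_, hdisj, fun a ha => ?_⟩
  · exact ⟨b, ball_subset_interior_closedBall (mem_ball_self (hρ b (huA hb)).1)⟩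
  · obtain ⟨b, hb, hab⟩ := hcov a ha
    exact mem_biUnion hb (hab (mem_closedBall_self (hρ a ha).1.le))

variable [MeasurableSpace X] [OpensMeasurableSpace X]

theorem exists_cover_mul_tsum_ediam_rpow_le (ν : Measure X) {s : ℝ} (hs : 0 ≤ s) {A : Set X}
    {C : ℝ≥0∞} {δ : ℝ}
    (h : ∀ a ∈ A, ∃ ρ ∈ Ioc 0 δ, C * ENNReal.ofReal (ρ ^ s) ≤ ν (closedBall a ρ)) :
    ∃ (ι : Type u) (_ : Countable ι) (t : ι → Set X),
      (∀ i, ediam (t i) ≤ ENNReal.ofReal (8 * δ)) ∧ A ⊆ ⋃ i, t i ∧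
        C * ∑' i, ediam (t i) ^ s ≤ 8 ^ s * ν univ := by
  choose! ρ hρ hνρ using h
  obtain ⟨u, huA, hu, hdisj, hcov⟩ := exists_countable_pairwiseDisjoint_closedBall_cover A ρ hρ
  have hρu : ∀ b : u, ρ b ∈ Ioc 0 δ := fun b => hρ b (huA b.2)
  have hediam : ∀ b : u, ediam (closedBall (b : X) (4 * ρ b)) ^ s ≤
      8 ^ s * ENNReal.ofReal (ρ b ^ s) := fun b => calc
    _ ≤ ENNReal.ofReal (2 * (4 * ρ b)) ^ s := by gcongr; exact ediam_closedBall_le _ _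
    _ = 8 ^ s * ENNReal.ofReal (ρ b ^ s) := by
      rw [← ENNReal.ofReal_rpow_of_nonneg (hρu b).1.le hs, ← ENNReal.mul_rpow_of_nonneg _ _ hs,
        ← ENNReal.ofReal_ofNat 8, ← ENNReal.ofReal_mul (by norm_num)]
      ring_nf
  refine ⟨u, hu.to_subtype, fun b => closedBall b (4 * ρ b), fun b => ?_, ?_, ?_⟩
  · refine (ediam_closedBall_le _ _).trans (ENNReal.ofReal_le_ofReal ?_)
    linarith [(hρu b).2]
  · simpa only [iUnion_coe_set] using hcov
  calc C * ∑' b : u, ediam (closedBall (b : X) (4 * ρ b)) ^ s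
      ≤ C * ∑' b : u, 8 ^ s * ENNReal.ofReal (ρ b ^ s) := by gcongr with b; exact hediam b
    _ = 8 ^ s * ∑' b : u, C * ENNReal.ofReal (ρ b ^ s) := by
      rw [ENNReal.tsum_mul_left, ENNReal.tsum_mul_left]; ring
    _ ≤ 8 ^ s * ∑' b : u, ν (closedBall b (ρ b)) := by gcongr with b; exact hνρ b (huA b.2)
    _ = 8 ^ s * ν (⋃ b ∈ u, closedBall b (ρ b)) := by
      rw [measure_biUnion hu hdisj fun _ _ => measurableSet_closedBall]
    _ ≤ 8 ^ s * ν univ := by gcongr; exact subset_univ _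

end Covering

theorem hausdorffMeasure_eq_zero_of_limsup_eq_top {X : Type u} [MetricSpace X]
    [TopologicalSpace.SeparableSpace X] [MeasurableSpace X] [BorelSpace X] (ν : Measure X)
    [IsFiniteMeasure ν] {s : ℝ} (hs : 0 ≤ s) {A : Set X}
    (h : ∀ a ∈ A, limsup (fun r : ℝ => ν (closedBall a r) / ENNReal.ofReal (r ^ s))
      (nhdsWithin 0 (Ioi 0)) = ⊤) :
    μH[s] A = 0 := by
  have bound : ∀ n : ℕ, n ≠ 0 → (n : ℝ≥0∞) * μH[s] A ≤ 8 ^ s * ν univ := by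
    intro n hn
    rw [mul_comm, ← ENNReal.le_div_iff_mul_le (.inl (Nat.cast_ne_zero.2 hn)) (.inl (by simp))]
    refine hausdorffMeasure_le_of_forall_exists_cover s A _ fun δ hδ => ?_
    obtain ⟨ι, hι, t, hdiam, hcover, hsum⟩ := exists_cover_mul_tsum_ediam_rpow_le ν hs
      fun a ha => exists_mem_Ioc_mul_rpow_le_of_limsup_eq_top (h a ha)
        (ENNReal.natCast_ne_top n) (div_pos hδ (by norm_num : (0 : ℝ) < 8))
    refine ⟨ι, hι, t, fun i => (hdiam i).trans_eq (by ring_nf), hcover, ?_⟩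
    rwa [ENNReal.le_div_iff_mul_le (.inl (Nat.cast_ne_zero.2 hn)) (.inl (by simp)), mul_comm]
  by_contra hA
  have hK : (8 : ℝ≥0∞) ^ s * ν univ ≠ ⊤ :=
    ENNReal.mul_ne_top (ENNReal.rpow_ne_top_of_nonneg hs (by simp)) (measure_ne_top ν univ)
  obtain ⟨n, hn⟩ := ENNReal.exists_nat_mul_gt hA hK
  have hn0 : n ≠ 0 := by rintro rfl; simp at hn
  exact (hn.trans_le (bound n hn0)).false

/-- Rogers–Taylor density argument (vanishing direction): if the upper `s`-density of `ν`
is infinite at `ν`-almost every point of `E`, and `H^s|_E ≪ ν`, then `H^s(E) = 0`. -/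
theorem stmt11 (ν : Measure ℝ) [IsFiniteMeasure ν] (s : ℝ) (hs : 0 < s)
    (E : Set ℝ) (hE : MeasurableSet E)
    (hdens : ∀ᵐ a ∂ν, a ∈ E →
      Filter.limsup (fun r : ℝ => ν (Metric.closedBall a r) / ENNReal.ofReal (r ^ s))
        (nhdsWithin 0 (Set.Ioi 0)) = ⊤)
    (habs : ∀ H ⊆ E, MeasurableSet H → ν H = 0 → μH[s] H = 0) :
    μH[s] E = 0 := by
  obtain ⟨Z, hbadZ, hZ, hνZ⟩ := exists_measurable_superset_of_null (ae_iff.1 hdens)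
  have hEZ : μH[s] (E ∩ Z) = 0 :=
    habs _ inter_subset_left (hE.inter hZ) (measure_mono_null inter_subset_right hνZ)
  have hEdiffZ : μH[s] (E \ Z) = 0 :=
    hausdorffMeasure_eq_zero_of_limsup_eq_top ν hs.le fun a ⟨haE, haZ⟩ =>
      of_not_not fun hbad => haZ (hbadZ fun himp => hbad (himp haE))
  exact measure_mono_null (inter_union_sdiff E Z).superset (measure_union_null hEZ hEdiffZ)
end

section
/- Suppose that for every ε > 0 and δ > 0 there exist two distinct pairs of words (u₁,v₁) ≠ (u₂,v₂) that are ε-relatively close δ-squares (in the sense of the given definitions for two fixed affine Cantor systems). Then for every ε > 0, δ > 0 and N ∈ ℕ there exist N distinct pairs of words that are pairwise ε-relatively close and each a δ-square. -/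
open Real Set

/-- Product of the contraction ratios (or orientations) along a finite word. -/
def wprod {n : ℕ} (f : Fin n → ℝ) (u : List (Fin n)) : ℝ := (u.map f).prod

/-- The infinite sequence obtained by appending the sequence `ω` to the word `u`. -/
def wcat {n : ℕ} (u : List (Fin n)) (ω : ℕ → Fin n) : ℕ → Fin n :=
  fun k => if h : k < u.length then u.get ⟨k, h⟩ else ω (k - u.length)

/-- `(u,v)` is a `δ`-square: `λ_u/γ_v ∈ (e^{-δ}, e^{δ})`. -/
def IsSq {A B : ℕ} (lam : Fin A → ℝ) (gam : Fin B → ℝ) (δ : ℝ)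
    (u : List (Fin A)) (v : List (Fin B)) : Prop :=
  wprod lam u / wprod gam v ∈ Set.Ioo (Real.exp (-δ)) (Real.exp δ)

/-- `(u₁,v₁)` and `(u₂,v₂)` are `ε`-relatively close (Definition 2.2), where
`L(ω,τ) = Π_λ(ω) + Π_γ(τ)` and `1̄` is realized as the constant sequence `0`. -/
def RelClose {A B : ℕ} (lam Ol : Fin (A + 1) → ℝ) (gam Og : Fin (B + 1) → ℝ)
    (Pl : (ℕ → Fin (A + 1)) → ℝ) (Pg : (ℕ → Fin (B + 1)) → ℝ) (D ε : ℝ)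
    (u1 : List (Fin (A + 1))) (v1 : List (Fin (B + 1)))
    (u2 : List (Fin (A + 1))) (v2 : List (Fin (B + 1))) : Prop :=
  wprod lam u1 / wprod lam u2 ∈ Set.Ioo (Real.exp (-ε)) (Real.exp ε) ∧
  wprod gam v1 / wprod gam v2 ∈ Set.Ioo (Real.exp (-ε)) (Real.exp ε) ∧
  wprod Ol u1 = wprod Ol u2 ∧ wprod Og v1 = wprod Og v2 ∧
  |(Pl (wcat u1 fun _ => 0) + Pg (wcat v1 fun _ => 0)) -
      (Pl (wcat u2 fun _ => 0) + Pg (wcat v2 fun _ => 0))| <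
    ε * D * min (min (wprod lam u1) (wprod lam u2)) (min (wprod gam v1) (wprod gam v2))

open Filter Topology

/-!
The coding maps are self-similar, so
`L(ax1̄, by1̄) - L(a1̄, b1̄) = O_a λ_a (Π_λ(x1̄) - Π_λ(1̄)) + O_b γ_b (Π_γ(y1̄) - Π_γ(1̄))`.
When `(a, b)` is nearly an exact square and `O_a = O_b`, the right side is
`O_a λ_a (L(x1̄, y1̄) - L(1̄, 1̄))` up to a small error. So prepending each of two very close such
pairs to every member of a family of `N` relatively close squares produces `2N` of them, at the
price of fixed factors in `δ` and `ε`; iterating gives any number. Two close squares with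
`O_a = O_b` come from the hypothesis: if the pair `(q, r), (q', r')` it provides has `O_q ≠ O_r`,
take a second pair `(p, w), (p', w')`, so much closer that appending the fixed square `(q, r)` keeps
it close; if `O_p ≠ O_w`, this appending makes the orientations agree.
-/

section Words

variable {n : ℕ}

lemma wprod_cons (f : Fin n → ℝ) (i : Fin n) (u : List (Fin n)) :
    wprod f (i :: u) = f i * wprod f u := by
  simp [wprod]

lemma wprod_append (f : Fin n → ℝ) (u v : List (Fin n)) :
    wprod f (u ++ v) = wprod f u * wprod f v := by
  simp [wprod]

lemma wprod_pos {f : Fin n → ℝ} (hf : ∀ i, 0 < f i) (u : List (Fin n)) : 0 < wprod f u :=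
  List.prod_pos fun _ hx => by
    obtain ⟨i, -, rfl⟩ := List.mem_map.1 hx
    exact hf i

lemma wprod_le_one {f : Fin n → ℝ} (hf : ∀ i, f i ∈ Set.Ioo (0 : ℝ) 1) (u : List (Fin n)) :
    wprod f u ≤ 1 := by
  induction u with
  | nil => simp [wprod]
  | cons i u ih =>
    rw [wprod_cons]
    exact mul_le_one₀ (hf i).2.le (wprod_pos (fun i => (hf i).1) u).le ih

lemma wprod_le_of_ne_nil {f : Fin n → ℝ} (hf : ∀ i, f i ∈ Set.Ioo (0 : ℝ) 1) {c : ℝ}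
    (hc : ∀ i, f i ≤ c) {u : List (Fin n)} (hu : u ≠ []) : wprod f u ≤ c := by
  obtain ⟨i, u, rfl⟩ := List.exists_cons_of_ne_nil hu
  rw [wprod_cons]
  exact (mul_le_of_le_one_right (hf i).1.le (wprod_le_one hf u)).trans (hc i)

lemma wprod_eq_one_or_eq_neg_one {f : Fin n → ℝ} (hf : ∀ i, f i = 1 ∨ f i = -1) (u : List (Fin n)) :
    wprod f u = 1 ∨ wprod f u = -1 := by
  induction u with
  | nil => simp [wprod]
  | cons i u ih =>
    rw [wprod_cons]
    rcases hf i with h | h <;> rcases ih with h' | h' <;> simp [h, h']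

lemma abs_wprod_eq_one {f : Fin n → ℝ} (hf : ∀ i, f i = 1 ∨ f i = -1) (u : List (Fin n)) :
    |wprod f u| = 1 := by
  rcases wprod_eq_one_or_eq_neg_one hf u with h | h <;> simp [h]

lemma wcat_append (u v : List (Fin n)) (ω : ℕ → Fin n) :
    wcat (u ++ v) ω = wcat u (wcat v ω) := by
  funext k
  simp only [wcat, List.length_append, List.get_eq_getElem]
  by_cases h : k < u.length
  · rw [dif_pos (by omega), dif_pos h, List.getElem_append_left h]
  · rw [dif_neg h]
    by_cases h' : k - u.length < v.length
    · rw [dif_pos (by omega), dif_pos h', List.getElem_append_right (by omega)]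
    · rw [dif_neg (by omega), dif_neg h', Nat.sub_sub]

lemma wcat_nil (ω : ℕ → Fin n) : wcat [] ω = ω := by
  funext k
  simp [wcat]

lemma wcat_cons_zero (i : Fin n) (u : List (Fin n)) (ω : ℕ → Fin n) :
    wcat (i :: u) ω 0 = i := by
  simp [wcat]

lemma wcat_cons_succ (i : Fin n) (u : List (Fin n)) (ω : ℕ → Fin n) :
    (fun k => wcat (i :: u) ω (k + 1)) = wcat u ω := by
  funext k
  simp only [wcat, List.length_cons, List.get_eq_getElem]
  by_cases h : k < u.length
  · rw [dif_pos (by omega), dif_pos h, List.getElem_cons_succ]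
  · rw [dif_neg (by omega), dif_neg h, Nat.add_sub_add_right]

lemma eq_nil_of_abs_log_wprod_append_lt {f : Fin n → ℝ} (hf : ∀ i, f i ∈ Set.Ioo (0 : ℝ) 1)
    {η : ℝ} (hη : ∀ i, f i ≤ exp (-η)) {u w : List (Fin n)}
    (h : |log (wprod f u) - log (wprod f (u ++ w))| < η) : w = [] := by
  by_contra hw
  have hpos : ∀ i, 0 < f i := fun i => (hf i).1
  have hlog : log (wprod f w) ≤ -η :=
    (log_le_iff_le_exp (wprod_pos hpos w)).2 (wprod_le_of_ne_nil hf hη hw)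
  rw [wprod_append, log_mul (wprod_pos hpos u).ne' (wprod_pos hpos w).ne'] at h
  linarith [le_abs_self (log (wprod f u) - (log (wprod f u) + log (wprod f w)))]

lemma append_inj_of_abs_log_wprod_lt {f : Fin n → ℝ} (hf : ∀ i, f i ∈ Set.Ioo (0 : ℝ) 1)
    {η : ℝ} (hη : ∀ i, f i ≤ exp (-η)) {u u' v v' : List (Fin n)}
    (huu' : |log (wprod f u) - log (wprod f u')| < η) (h : u ++ v = u' ++ v') :
    u = u' ∧ v = v' := by
  rcases List.append_eq_append_iff.1 h with ⟨w, rfl, rfl⟩ | ⟨w, rfl, rfl⟩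
  · obtain rfl := eq_nil_of_abs_log_wprod_append_lt hf hη huu'
    simp
  · obtain rfl := eq_nil_of_abs_log_wprod_append_lt hf hη ((abs_sub_comm _ _).trans_lt huu')
    simp

def IsCodingMap (O l b : Fin n → ℝ) (P : (ℕ → Fin n) → ℝ) : Prop :=
  ∀ ω, P ω = O (ω 0) * l (ω 0) * P (fun k => ω (k + 1)) + b (ω 0)

lemma IsCodingMap.apply_wcat_sub_apply_wcat {O l b : Fin n → ℝ} {P : (ℕ → Fin n) → ℝ}
    (hP : IsCodingMap O l b P) (u : List (Fin n)) (ω ω' : ℕ → Fin n) :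
    P (wcat u ω) - P (wcat u ω') = wprod O u * wprod l u * (P ω - P ω') := by
  induction u with
  | nil => simp [wcat_nil, wprod]
  | cons i u ih =>
    rw [hP (wcat _ ω), hP (wcat _ ω'), wcat_cons_zero, wcat_cons_zero, wcat_cons_succ,
      wcat_cons_succ, wprod_cons, wprod_cons]
    linear_combination O i * l i * ih

end Words

section Estimates

lemma div_mem_Ioo_exp_iff {x y δ : ℝ} (hx : 0 < x) (hy : 0 < y) :
    x / y ∈ Set.Ioo (exp (-δ)) (exp δ) ↔ |log x - log y| < δ := by
  rw [Set.mem_Ioo, ← Real.log_div hx.ne' hy.ne', abs_lt,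
    Real.lt_log_iff_exp_lt (div_pos hx hy), Real.log_lt_iff_lt_exp (div_pos hx hy)]

lemma abs_sub_le_of_abs_log_sub_le {x y η : ℝ} (hx : 0 < x) (hy : 0 < y)
    (h : |log x - log y| ≤ η) (hη : η ≤ 1) : |x - y| ≤ 2 * η * x := by
  have hxy : x - y = -(x * (exp (log y - log x) - 1)) := by
    rw [exp_sub, exp_log hx, exp_log hy]
    field_simp
    ring
  have h' : |log y - log x| ≤ η := by rwa [abs_sub_comm]
  rw [hxy, abs_neg, abs_mul, abs_of_pos hx]
  calc x * |exp (log y - log x) - 1| ≤ x * (2 * |log y - log x|) := by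
        gcongr
        exact abs_exp_sub_one_le (h'.trans hη)
    _ ≤ 2 * η * x := by nlinarith

lemma le_two_mul_of_abs_log_sub_le {x y : ℝ} (hx : 0 < x) (hy : 0 < y)
    (h : |log x - log y| ≤ 1 / 2) : x ≤ 2 * y := by
  rw [abs_sub_comm] at h
  have := abs_le.1 (abs_sub_le_of_abs_log_sub_le hy hx h (by norm_num))
  linarith

lemma abs_add_sub_add_lt {a b c d r s : ℝ} (h₁ : |a - b| < r) (h₂ : |c - d| < s) :
    |a + c - (b + d)| < r + s :=
  calc |a + c - (b + d)| = |(a - b) + (c - d)| := by ring_nf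
    _ ≤ |a - b| + |c - d| := abs_add_le _ _
    _ < r + s := add_lt_add h₁ h₂

lemma abs_comb_sub_comb_le {s α α' β β' p p' q q' P Q D η F : ℝ} (hs : |s| = 1)
    (hα : 0 < α) (hα' : 0 < α') (hβ : 0 < β) (hβ' : 0 < β') (hη : η ≤ 1 / 2)
    (hαα' : |log α - log α'| ≤ η) (hββ' : |log β - log β'| ≤ η) (hαβ : |log α - log β| ≤ η)
    (hp' : |p' - P| ≤ D) (hq' : |q' - Q| ≤ D) (hqq' : |q - q'| ≤ D)
    (hF : |p + q - (p' + q')| ≤ F) :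
    |s * α * (p - P) + s * β * (q - Q) - (s * α' * (p' - P) + s * β' * (q' - Q))| ≤
      α * (F + 8 * η * D) := by
  have hα'α := abs_sub_le_of_abs_log_sub_le hα hα' hαα' (by linarith)
  have hβ'β := abs_sub_le_of_abs_log_sub_le hβ hβ' hββ' (by linarith)
  have hβα := abs_sub_le_of_abs_log_sub_le hα hβ hαβ (by linarith)
  have hβ2 : β ≤ 2 * α :=
    le_two_mul_of_abs_log_sub_le hβ hα ((abs_sub_comm _ _).trans_le (hαβ.trans hη))
  have hη0 : 0 ≤ η := (abs_nonneg _).trans hαα'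
  have hD : 0 ≤ D := (abs_nonneg _).trans hp'
  calc _ = |α * (p + q - (p' + q')) + (β - α) * (q - q') + (α - α') * (p' - P)
          + (β - β') * (q' - Q)| := by
        rw [← one_mul |α * _ + _ + _ + _|, ← hs, ← abs_mul]
        ring_nf
    _ ≤ |α * (p + q - (p' + q'))| + |(β - α) * (q - q')| + |(α - α') * (p' - P)|
          + |(β - β') * (q' - Q)| :=
        (abs_add_le _ _).trans (add_le_add_left (abs_add_three _ _ _) _)
    _ ≤ α * F + 2 * η * α * D + 2 * η * α * D + 2 * η * β * D := by
        rw [abs_mul, abs_mul, abs_mul, abs_mul, abs_of_pos hα, abs_sub_comm β α]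
        gcongr
    _ ≤ α * (F + 8 * η * D) := by
        nlinarith [mul_le_mul_of_nonneg_left hβ2 (by positivity : 0 ≤ 2 * η * D)]

lemma half_mul_le_min_mul {α α' β β' m s t u v : ℝ} (hα : 0 ≤ α) (hα' : α ≤ 2 * α')
    (hβ : α ≤ 2 * β) (hβ' : α ≤ 2 * β') (hm : 0 ≤ m)
    (hs : m ≤ s) (ht : m ≤ t) (hu : m ≤ u) (hv : m ≤ v) :
    α / 2 * m ≤ min (min (α * s) (α' * t)) (min (β * u) (β' * v)) := by
  simp only [le_min_iff]
  refine ⟨⟨?_, ?_⟩, ?_, ?_⟩ <;> nlinarith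

lemma abs_add_lt_mul_min {L E C η ε D α α' β β' m s t u v : ℝ}
    (hα : 0 < α) (hα' : 0 < α') (hβ : 0 < β) (hβ' : 0 < β')
    (hαα' : |log α - log α'| ≤ 1 / 2) (hαβ : |log α - log β| ≤ 1 / 2)
    (hαβ' : |log α - log β'| ≤ 1 / 2)
    (hm : 0 < m) (hs : m ≤ s) (ht : m ≤ t) (hu : m ≤ u) (hv : m ≤ v) (hηD : 0 ≤ η * D)
    (hL : |L| < η * D * min (min α α') (min β β')) (hE : |E| ≤ α * C)
    (hC : 2 * (η * D + C) ≤ ε * D * m) :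
    |L + E| < ε * D * min (min (α * s) (α' * t)) (min (β * u) (β' * v)) := by
  have hLα : |L| < η * D * α :=
    hL.trans_le (mul_le_mul_of_nonneg_left (min_le_of_left_le (min_le_left _ _)) hηD)
  have hC0 : 0 ≤ C := nonneg_of_mul_nonneg_right ((abs_nonneg E).trans hE) hα
  have hεD : 0 ≤ ε * D := nonneg_of_mul_nonneg_left (by linarith) hm
  have hlow := half_mul_le_min_mul hα.le (le_two_mul_of_abs_log_sub_le hα hα' hαα')
    (le_two_mul_of_abs_log_sub_le hα hβ hαβ) (le_two_mul_of_abs_log_sub_le hα hβ' hαβ')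
    hm.le hs ht hu hv
  calc |L + E| ≤ |L| + |E| := abs_add_le _ _
    _ < η * D * α + α * C := add_lt_add_of_lt_of_le hLα hE
    _ ≤ ε * D * (α / 2 * m) := by nlinarith
    _ ≤ _ := mul_le_mul_of_nonneg_left hlow hεD

lemma abs_mul_sub_add_mul_sub_le {s t α α' β β' X Y D η : ℝ} (hs : |s| = 1) (ht : |t| = 1)
    (hα : 0 < α) (hα' : 0 < α') (hβ : 0 < β) (hβ' : 0 < β') (hη : η ≤ 1)
    (hαα' : |log α - log α'| ≤ η) (hββ' : |log β - log β'| ≤ η)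
    (hαβ : |log α - log β| ≤ 1 / 2) (hX : |X| ≤ D) (hY : |Y| ≤ D) :
    |s * ((α - α') * X) + t * ((β - β') * Y)| ≤ α * (6 * η * D) := by
  have hα'α := abs_sub_le_of_abs_log_sub_le hα hα' hαα' hη
  have hβ'β := abs_sub_le_of_abs_log_sub_le hβ hβ' hββ' hη
  have hβα : β ≤ 2 * α := le_two_mul_of_abs_log_sub_le hβ hα ((abs_sub_comm _ _).trans_le hαβ)
  have hη0 : 0 ≤ η := (abs_nonneg _).trans hαα'
  have hD : 0 ≤ D := (abs_nonneg _).trans hX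
  calc _ ≤ |s * ((α - α') * X)| + |t * ((β - β') * Y)| := abs_add_le _ _
    _ = |α - α'| * |X| + |β - β'| * |Y| := by simp only [abs_mul, hs, ht, one_mul]
    _ ≤ 2 * η * α * D + 2 * η * β * D := by gcongr
    _ ≤ α * (6 * η * D) := by
        nlinarith [mul_le_mul_of_nonneg_left hβα (by positivity : 0 ≤ 2 * η * D)]

lemma Finset.exists_pos_forall_le {ι : Type*} (s : Finset ι) {f : ι → ℝ}
    (hf : ∀ i ∈ s, 0 < f i) : ∃ c > 0, ∀ i ∈ s, c ≤ f i := by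
  rcases s.eq_empty_or_nonempty with rfl | hs
  · exact ⟨1, one_pos, by simp⟩
  · obtain ⟨i, hi, hmin⟩ := s.exists_min_image f hs
    exact ⟨f i, hf i hi, hmin⟩

lemma eventually_forall_le_exp_neg {ι : Type*} [Finite ι] {f : ι → ℝ} (hf : ∀ i, f i < 1) :
    ∀ᶠ η in 𝓝 (0 : ℝ), ∀ i, f i ≤ exp (-η) :=
  eventually_all.2 fun i =>
    ((continuous_exp.comp continuous_neg).tendsto' 0 1 (by simp)).eventually_const_le (hf i)

end Estimates

section Squares

variable {A B : ℕ} {lam : Fin A → ℝ} {gam : Fin B → ℝ}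

lemma isSq_iff {δ : ℝ} (hlam : ∀ i, 0 < lam i) (hgam : ∀ j, 0 < gam j)
    {u : List (Fin A)} {v : List (Fin B)} :
    IsSq lam gam δ u v ↔ |log (wprod lam u) - log (wprod gam v)| < δ :=
  div_mem_Ioo_exp_iff (wprod_pos hlam u) (wprod_pos hgam v)

lemma IsSq.mono {δ δ' : ℝ} {u : List (Fin A)} {v : List (Fin B)}
    (h : IsSq lam gam δ u v) (hδ : δ ≤ δ') : IsSq lam gam δ' u v :=
  ⟨(exp_le_exp.2 (neg_le_neg hδ)).trans_lt h.1, h.2.trans_le (exp_le_exp.2 hδ)⟩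

lemma IsSq.append {δ δ' : ℝ} (hlam : ∀ i, 0 < lam i) (hgam : ∀ j, 0 < gam j)
    {u u' : List (Fin A)} {v v' : List (Fin B)}
    (h : IsSq lam gam δ u v) (h' : IsSq lam gam δ' u' v') :
    IsSq lam gam (δ + δ') (u ++ u') (v ++ v') := by
  rw [isSq_iff hlam hgam] at h h' ⊢
  rw [wprod_append, wprod_append, log_mul (wprod_pos hlam u).ne' (wprod_pos hlam u').ne',
    log_mul (wprod_pos hgam v).ne' (wprod_pos hgam v').ne']
  exact abs_add_sub_add_lt h h'

lemma isSq_nil {δ : ℝ} (hδ : 0 < δ) : IsSq lam gam δ [] [] := by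
  simp [IsSq, wprod, hδ]

end Squares

section Closeness

variable {A B : ℕ} {lam Ol : Fin (A + 1) → ℝ} {gam Og : Fin (B + 1) → ℝ}
  {Pl : (ℕ → Fin (A + 1)) → ℝ} {Pg : (ℕ → Fin (B + 1)) → ℝ} {D : ℝ}

/-- `L(u1̄, v1̄)` in the notation of the paper. -/
def sumCoding (Pl : (ℕ → Fin (A + 1)) → ℝ) (Pg : (ℕ → Fin (B + 1)) → ℝ)
    (u : List (Fin (A + 1))) (v : List (Fin (B + 1))) : ℝ :=
  Pl (wcat u fun _ => 0) + Pg (wcat v fun _ => 0)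

lemma sumCoding_append {bl : Fin (A + 1) → ℝ} {bg : Fin (B + 1) → ℝ}
    (hPl : IsCodingMap Ol lam bl Pl) (hPg : IsCodingMap Og gam bg Pg)
    (a x : List (Fin (A + 1))) (b y : List (Fin (B + 1))) :
    sumCoding Pl Pg (a ++ x) (b ++ y) = sumCoding Pl Pg a b
      + wprod Ol a * wprod lam a * (Pl (wcat x fun _ => 0) - Pl fun _ => 0)
      + wprod Og b * wprod gam b * (Pg (wcat y fun _ => 0) - Pg fun _ => 0) := by
  have hx := hPl.apply_wcat_sub_apply_wcat a (wcat x fun _ => 0) fun _ => 0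
  have hy := hPg.apply_wcat_sub_apply_wcat b (wcat y fun _ => 0) fun _ => 0
  rw [sumCoding, sumCoding, wcat_append, wcat_append]
  linarith

lemma relClose_iff {ε : ℝ} (hlam : ∀ i, 0 < lam i) (hgam : ∀ j, 0 < gam j)
    {u₁ u₂ : List (Fin (A + 1))} {v₁ v₂ : List (Fin (B + 1))} :
    RelClose lam Ol gam Og Pl Pg D ε u₁ v₁ u₂ v₂ ↔
      |log (wprod lam u₁) - log (wprod lam u₂)| < ε ∧
      |log (wprod gam v₁) - log (wprod gam v₂)| < ε ∧
      wprod Ol u₁ = wprod Ol u₂ ∧ wprod Og v₁ = wprod Og v₂ ∧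
      |sumCoding Pl Pg u₁ v₁ - sumCoding Pl Pg u₂ v₂| <
        ε * D * min (min (wprod lam u₁) (wprod lam u₂)) (min (wprod gam v₁) (wprod gam v₂)) := by
  rw [RelClose, div_mem_Ioo_exp_iff (wprod_pos hlam _) (wprod_pos hlam _),
    div_mem_Ioo_exp_iff (wprod_pos hgam _) (wprod_pos hgam _)]
  rfl

lemma relClose_refl {ε : ℝ} (hlam : ∀ i, 0 < lam i) (hgam : ∀ j, 0 < gam j) (hD : 0 < D)
    (hε : 0 < ε) (u : List (Fin (A + 1))) (v : List (Fin (B + 1))) :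
    RelClose lam Ol gam Og Pl Pg D ε u v u v := by
  rw [relClose_iff hlam hgam]
  simp only [sub_self, abs_zero, min_self]
  have := wprod_pos hlam u
  have := wprod_pos hgam v
  exact ⟨hε, hε, trivial, trivial, by positivity⟩

lemma RelClose.symm {ε : ℝ} (hlam : ∀ i, 0 < lam i) (hgam : ∀ j, 0 < gam j)
    {u₁ u₂ : List (Fin (A + 1))} {v₁ v₂ : List (Fin (B + 1))}
    (h : RelClose lam Ol gam Og Pl Pg D ε u₁ v₁ u₂ v₂) :
    RelClose lam Ol gam Og Pl Pg D ε u₂ v₂ u₁ v₁ := by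
  rw [relClose_iff hlam hgam] at h ⊢
  obtain ⟨h₁, h₂, h₃, h₄, h₅⟩ := h
  rw [abs_sub_comm] at h₁ h₂ h₅
  rw [min_comm (wprod lam u₂), min_comm (wprod gam v₂)]
  exact ⟨h₁, h₂, h₃.symm, h₄.symm, h₅⟩

lemma RelClose.mono {ε ε' : ℝ} (hlam : ∀ i, 0 < lam i) (hgam : ∀ j, 0 < gam j) (hD : 0 ≤ D)
    {u₁ u₂ : List (Fin (A + 1))} {v₁ v₂ : List (Fin (B + 1))}
    (h : RelClose lam Ol gam Og Pl Pg D ε u₁ v₁ u₂ v₂) (hε : ε ≤ ε') :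
    RelClose lam Ol gam Og Pl Pg D ε' u₁ v₁ u₂ v₂ := by
  rw [relClose_iff hlam hgam] at h ⊢
  obtain ⟨h₁, h₂, h₃, h₄, h₅⟩ := h
  have hm : 0 ≤ min (min (wprod lam u₁) (wprod lam u₂)) (min (wprod gam v₁) (wprod gam v₂)) :=
    le_min (le_min (wprod_pos hlam _).le (wprod_pos hlam _).le)
      (le_min (wprod_pos hgam _).le (wprod_pos hgam _).le)
  exact ⟨h₁.trans_le hε, h₂.trans_le hε, h₃, h₄, h₅.trans_le (by gcongr)⟩

end Closeness

section Composition

variable {A B : ℕ} {lam Ol bl : Fin (A + 1) → ℝ} {gam Og bg : Fin (B + 1) → ℝ}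
  {Pl : (ℕ → Fin (A + 1)) → ℝ} {Pg : (ℕ → Fin (B + 1)) → ℝ} {D : ℝ}

lemma RelClose.append (hlam : ∀ i, lam i ∈ Set.Ioo (0 : ℝ) 1)
    (hgam : ∀ j, gam j ∈ Set.Ioo (0 : ℝ) 1) (hOl : ∀ i, Ol i = 1 ∨ Ol i = -1)
    (hPl : IsCodingMap Ol lam bl Pl) (hPg : IsCodingMap Og gam bg Pg)
    (hPlD : ∀ ω ω', |Pl ω - Pl ω'| ≤ D) (hPgD : ∀ τ τ', |Pg τ - Pg τ'| ≤ D)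
    {η ε : ℝ} {a a' x x' : List (Fin (A + 1))} {b b' y y' : List (Fin (B + 1))}
    (hab : RelClose lam Ol gam Og Pl Pg D η a b a' b')
    (hxy : RelClose lam Ol gam Og Pl Pg D (ε / 8) x y x' y')
    (hsq : IsSq lam gam η a b) (horient : wprod Ol a = wprod Og b) (hη : η ≤ 1 / 4)
    (hηε : 24 * η ≤
      ε * min (min (wprod lam x) (wprod lam x')) (min (wprod gam y) (wprod gam y'))) :
    RelClose lam Ol gam Og Pl Pg D ε (a ++ x) (b ++ y) (a' ++ x') (b' ++ y') := by
  have hl : ∀ i, 0 < lam i := fun i => (hlam i).1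
  have hg : ∀ j, 0 < gam j := fun j => (hgam j).1
  rw [isSq_iff hl hg] at hsq
  rw [relClose_iff hl hg] at hab hxy ⊢
  obtain ⟨hαα', hββ', hOa, hOb, hL⟩ := hab
  obtain ⟨hxx', hyy', hOx, hOy, hLxy⟩ := hxy
  set m := min (min (wprod lam x) (wprod lam x')) (min (wprod gam y) (wprod gam y'))
  have hm : 0 < m := lt_min (lt_min (wprod_pos hl x) (wprod_pos hl x'))
    (lt_min (wprod_pos hg y) (wprod_pos hg y'))
  have hm1 : m ≤ 1 := min_le_of_left_le (min_le_of_left_le (wprod_le_one hlam x))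
  have hη0 : 0 ≤ η := (abs_nonneg _).trans hsq.le
  have hD : 0 ≤ D := (abs_nonneg _).trans (hPlD (fun _ => 0) fun _ => 0)
  have hηε' : η + ε / 8 ≤ ε := by nlinarith [(abs_nonneg _).trans_lt hxx']
  simp only [wprod_append, log_mul (wprod_pos hl _).ne' (wprod_pos hl _).ne',
    log_mul (wprod_pos hg _).ne' (wprod_pos hg _).ne']
  refine ⟨(abs_add_sub_add_lt hαα' hxx').trans_le hηε',
    (abs_add_sub_add_lt hββ' hyy').trans_le hηε', by rw [hOa, hOx], by rw [hOb, hOy], ?_⟩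
  rw [sumCoding_append hPl hPg, sumCoding_append hPl hPg, ← hOa, ← hOb, ← horient]
  rw [show ∀ L L' E E' F F' : ℝ, L + E + F - (L' + E' + F') = (L - L') + (E + F - (E' + F'))
    from fun _ _ _ _ _ _ => by ring]
  refine abs_add_lt_mul_min (wprod_pos hl a) (wprod_pos hl a') (wprod_pos hg b) (wprod_pos hg b')
    (by linarith) (by linarith)
    (by linarith [abs_sub_le (log (wprod lam a)) (log (wprod gam b)) (log (wprod gam b'))])
    hm (min_le_of_left_le (min_le_left _ _)) (min_le_of_left_le (min_le_right _ _))
    (min_le_of_right_le (min_le_left _ _)) (min_le_of_right_le (min_le_right _ _))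
    (mul_nonneg hη0 hD) hL
    (abs_comb_sub_comb_le (abs_wprod_eq_one hOl a) (wprod_pos hl a) (wprod_pos hl a')
      (wprod_pos hg b) (wprod_pos hg b') (by linarith) hαα'.le hββ'.le hsq.le (hPlD _ _)
      (hPgD _ _) (hPgD _ _) hLxy.le) (by nlinarith)

lemma RelClose.append_right (hlam : ∀ i, lam i ∈ Set.Ioo (0 : ℝ) 1)
    (hgam : ∀ j, gam j ∈ Set.Ioo (0 : ℝ) 1) (hOl : ∀ i, Ol i = 1 ∨ Ol i = -1)
    (hOg : ∀ j, Og j = 1 ∨ Og j = -1)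
    (hPl : IsCodingMap Ol lam bl Pl) (hPg : IsCodingMap Og gam bg Pg)
    (hPlD : ∀ ω ω', |Pl ω - Pl ω'| ≤ D) (hPgD : ∀ τ τ', |Pg τ - Pg τ'| ≤ D)
    {δ η ε : ℝ} {p p' q : List (Fin (A + 1))} {w w' r : List (Fin (B + 1))}
    (hpw : RelClose lam Ol gam Og Pl Pg D η p w p' w') (hsq : IsSq lam gam δ p w)
    (hδ : δ + η ≤ 1 / 2) (hηε : 14 * η ≤ ε * min (wprod lam q) (wprod gam r)) :
    RelClose lam Ol gam Og Pl Pg D ε (p ++ q) (w ++ r) (p' ++ q) (w' ++ r) := by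
  have hl : ∀ i, 0 < lam i := fun i => (hlam i).1
  have hg : ∀ j, 0 < gam j := fun j => (hgam j).1
  rw [isSq_iff hl hg] at hsq
  rw [relClose_iff hl hg] at hpw ⊢
  obtain ⟨hαα', hββ', hOp, hOw, hL⟩ := hpw
  have hmq : 0 < min (wprod lam q) (wprod gam r) := lt_min (wprod_pos hl q) (wprod_pos hg r)
  have hmq1 : min (wprod lam q) (wprod gam r) ≤ 1 := min_le_of_left_le (wprod_le_one hlam q)
  have hη0 : 0 ≤ η := (abs_nonneg _).trans hαα'.le
  have hδ0 : 0 ≤ δ := (abs_nonneg _).trans hsq.le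
  have hD : 0 ≤ D := (abs_nonneg _).trans (hPlD (fun _ => 0) fun _ => 0)
  have hηε' : η ≤ ε := by nlinarith
  simp only [wprod_append, log_mul (wprod_pos hl _).ne' (wprod_pos hl _).ne',
    log_mul (wprod_pos hg _).ne' (wprod_pos hg _).ne', add_sub_add_right_eq_sub]
  refine ⟨hαα'.trans_le hηε', hββ'.trans_le hηε', by rw [hOp], by rw [hOw], ?_⟩
  rw [sumCoding_append hPl hPg, sumCoding_append hPl hPg, ← hOp, ← hOw]
  rw [show ∀ L L' s t α α' β β' X Y : ℝ, L + s * α * X + t * β * Y - (L' + s * α' * X + t * β' * Y)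
    = (L - L') + (s * ((α - α') * X) + t * ((β - β') * Y)) from
    fun _ _ _ _ _ _ _ _ _ _ => by ring]
  refine abs_add_lt_mul_min (wprod_pos hl p) (wprod_pos hl p') (wprod_pos hg w) (wprod_pos hg w')
    (by linarith) (by linarith)
    (by linarith [abs_sub_le (log (wprod lam p)) (log (wprod gam w)) (log (wprod gam w'))])
    hmq (min_le_left _ _) (min_le_left _ _) (min_le_right _ _) (min_le_right _ _)
    (mul_nonneg hη0 hD) hL
    (abs_mul_sub_add_mul_sub_le (abs_wprod_eq_one hOl p) (abs_wprod_eq_one hOg w) (wprod_pos hl p)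
      (wprod_pos hl p') (wprod_pos hg w) (wprod_pos hg w') (by linarith) hαα'.le hββ'.le
      (by linarith) (hPlD _ _) (hPgD _ _)) (by nlinarith)

end Composition

section Doubling

variable {A B : ℕ} {lam Ol bl : Fin (A + 1) → ℝ} {gam Og bg : Fin (B + 1) → ℝ}
  {Pl : (ℕ → Fin (A + 1)) → ℝ} {Pg : (ℕ → Fin (B + 1)) → ℝ} {D : ℝ}

variable (lam Ol gam Og Pl Pg D) in
def CloseSquares (δ ε : ℝ) (S : Finset (List (Fin (A + 1)) × List (Fin (B + 1)))) : Prop :=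
  ∀ z ∈ S, IsSq lam gam δ z.1 z.2 ∧ ∀ z' ∈ S, RelClose lam Ol gam Og Pl Pg D ε z.1 z.2 z'.1 z'.2

def pairAppend {α β : Type*} (z z' : List α × List β) : List α × List β :=
  (z.1 ++ z'.1, z.2 ++ z'.2)

lemma closeSquares_pair (hlam : ∀ i, 0 < lam i) (hgam : ∀ j, 0 < gam j) (hD : 0 < D)
    {η : ℝ} (hη : 0 < η) {a a' : List (Fin (A + 1))} {b b' : List (Fin (B + 1))}
    (hsq : IsSq lam gam η a b) (hsq' : IsSq lam gam η a' b')
    (hcl : RelClose lam Ol gam Og Pl Pg D η a b a' b') :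
    CloseSquares lam Ol gam Og Pl Pg D η η {(a, b), (a', b')} := by
  simp only [CloseSquares, Finset.mem_insert, Finset.mem_singleton, forall_eq_or_imp, forall_eq]
  exact ⟨⟨hsq, relClose_refl hlam hgam hD hη _ _, hcl⟩,
    hsq', hcl.symm hlam hgam, relClose_refl hlam hgam hD hη _ _⟩

lemma CloseSquares.image₂_pairAppend (hlam : ∀ i, lam i ∈ Set.Ioo (0 : ℝ) 1)
    (hgam : ∀ j, gam j ∈ Set.Ioo (0 : ℝ) 1) (hOl : ∀ i, Ol i = 1 ∨ Ol i = -1)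
    (hPl : IsCodingMap Ol lam bl Pl) (hPg : IsCodingMap Og gam bg Pg)
    (hPlD : ∀ ω ω', |Pl ω - Pl ω'| ≤ D) (hPgD : ∀ τ τ', |Pg τ - Pg τ'| ≤ D)
    {η δ ε Λ : ℝ} {S₀ S : Finset (List (Fin (A + 1)) × List (Fin (B + 1)))}
    (h₀ : CloseSquares lam Ol gam Og Pl Pg D η η S₀)
    (horient : ∀ z ∈ S₀, wprod Ol z.1 = wprod Og z.2)
    (h : CloseSquares lam Ol gam Og Pl Pg D (δ / 2) (ε / 8) S)
    (hΛ : ∀ z ∈ S, Λ ≤ wprod lam z.1 ∧ Λ ≤ wprod gam z.2)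
    (hε : 0 ≤ ε) (hη : η ≤ 1 / 4) (hηδ : η ≤ δ / 2) (hηΛ : 24 * η ≤ ε * Λ) :
    CloseSquares lam Ol gam Og Pl Pg D δ ε (Finset.image₂ pairAppend S₀ S) := by
  have hl : ∀ i, 0 < lam i := fun i => (hlam i).1
  have hg : ∀ j, 0 < gam j := fun j => (hgam j).1
  simp only [CloseSquares, Finset.mem_image₂]
  rintro _ ⟨a, ha, x, hx, rfl⟩
  refine ⟨((h₀ a ha).1.append hl hg (h x hx).1).mono (by linarith), ?_⟩
  rintro _ ⟨a', ha', x', hx', rfl⟩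
  refine ((h₀ a ha).2 a' ha').append hlam hgam hOl hPl hPg hPlD hPgD ((h x hx).2 x' hx')
    (h₀ a ha).1 (horient a ha) hη (hηΛ.trans (mul_le_mul_of_nonneg_left ?_ hε))
  exact le_min (le_min (hΛ x hx).1 (hΛ x' hx').1) (le_min (hΛ x hx).2 (hΛ x' hx').2)

lemma CloseSquares.card_image₂_pairAppend (hlam : ∀ i, lam i ∈ Set.Ioo (0 : ℝ) 1)
    (hgam : ∀ j, gam j ∈ Set.Ioo (0 : ℝ) 1) {η δ : ℝ}
    (hηl : ∀ i, lam i ≤ exp (-η)) (hηg : ∀ j, gam j ≤ exp (-η))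
    {S₀ : Finset (List (Fin (A + 1)) × List (Fin (B + 1)))}
    (h₀ : CloseSquares lam Ol gam Og Pl Pg D δ η S₀)
    (S : Finset (List (Fin (A + 1)) × List (Fin (B + 1)))) :
    (Finset.image₂ pairAppend S₀ S).card = S₀.card * S.card := by
  refine Finset.card_image₂_iff.2 ?_
  rintro ⟨a, x⟩ ⟨ha, -⟩ ⟨a', x'⟩ ⟨ha', -⟩ h
  obtain ⟨hαα', hββ', -⟩ := (relClose_iff (fun i => (hlam i).1) fun j => (hgam j).1).1
    ((h₀ a ha).2 a' ha')
  simp only [pairAppend, Prod.mk.injEq] at h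
  obtain ⟨h₁, h₂⟩ := append_inj_of_abs_log_wprod_lt hlam hηl hαα' h.1
  obtain ⟨h₃, h₄⟩ := append_inj_of_abs_log_wprod_lt hgam hηg hββ' h.2
  simp [Prod.ext_iff, h₁, h₂, h₃, h₄]

end Doubling

section Main

variable {A B : ℕ} {lam Ol bl : Fin (A + 1) → ℝ} {gam Og bg : Fin (B + 1) → ℝ}
  {Pl : (ℕ → Fin (A + 1)) → ℝ} {Pg : (ℕ → Fin (B + 1)) → ℝ} {D : ℝ}

variable (lam Ol gam Og Pl Pg D) in
def ExistsCloseSquarePair : Prop :=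
  ∀ ε > (0 : ℝ), ∀ δ > (0 : ℝ), ∃ (u₁ u₂ : List (Fin (A + 1))) (v₁ v₂ : List (Fin (B + 1))),
    (u₁, v₁) ≠ (u₂, v₂) ∧ IsSq lam gam δ u₁ v₁ ∧ IsSq lam gam δ u₂ v₂ ∧
      RelClose lam Ol gam Og Pl Pg D ε u₁ v₁ u₂ v₂

lemma exists_closeSquares_card_eq_two (hlam : ∀ i, lam i ∈ Set.Ioo (0 : ℝ) 1)
    (hgam : ∀ j, gam j ∈ Set.Ioo (0 : ℝ) 1)
    (hOl : ∀ i, Ol i = 1 ∨ Ol i = -1) (hOg : ∀ j, Og j = 1 ∨ Og j = -1)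
    (hPl : IsCodingMap Ol lam bl Pl) (hPg : IsCodingMap Og gam bg Pg)
    (hPlD : ∀ ω ω', |Pl ω - Pl ω'| ≤ D) (hPgD : ∀ τ τ', |Pg τ - Pg τ'| ≤ D) (hD : 0 < D)
    (hyp : ExistsCloseSquarePair lam Ol gam Og Pl Pg D)
    {η : ℝ} (hη : 0 < η) (hη4 : η ≤ 1 / 4) :
    ∃ S₀, S₀.card = 2 ∧ CloseSquares lam Ol gam Og Pl Pg D η η S₀ ∧
      ∀ z ∈ S₀, wprod Ol z.1 = wprod Og z.2 := by
  have hl : ∀ i, 0 < lam i := fun i => (hlam i).1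
  have hg : ∀ j, 0 < gam j := fun j => (hgam j).1
  suffices ∃ a a' b b', (a, b) ≠ (a', b') ∧ IsSq lam gam η a b ∧ IsSq lam gam η a' b' ∧
      RelClose lam Ol gam Og Pl Pg D η a b a' b' ∧ wprod Ol a = wprod Og b by
    obtain ⟨a, a', b, b', hne, hsq, hsq', hcl, horient⟩ := this
    refine ⟨{(a, b), (a', b')}, Finset.card_pair hne, closeSquares_pair hl hg hD hη hsq hsq' hcl,
      ?_⟩
    simp only [Finset.mem_insert, Finset.mem_singleton, forall_eq_or_imp, forall_eq]
    exact ⟨horient, hcl.2.2.1 ▸ hcl.2.2.2.1 ▸ horient⟩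
  obtain ⟨q, q', r, r', hne, hsq, hsq', hcl⟩ := hyp η hη (η / 2) (half_pos hη)
  by_cases hqr : wprod Ol q = wprod Og r
  · exact ⟨q, q', r, r', hne, hsq.mono (by linarith), hsq'.mono (by linarith), hcl, hqr⟩
  set ε₁ := η * min (wprod lam q) (wprod gam r) / 14
  have hmq := lt_min (wprod_pos hl q) (wprod_pos hg r)
  have hmq1 : min (wprod lam q) (wprod gam r) ≤ 1 := min_le_of_left_le (wprod_le_one hlam q)
  have hε₁ : ε₁ ≤ η / 14 := by simp only [ε₁]; gcongr; nlinarith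
  obtain ⟨p, p', w, w', hne', hsp, hsp', hcl'⟩ := hyp ε₁ (by positivity) (η / 2) (half_pos hη)
  by_cases hpw : wprod Ol p = wprod Og w
  · exact ⟨p, p', w, w', hne', hsp.mono (by linarith), hsp'.mono (by linarith),
      hcl'.mono hl hg hD.le (by linarith), hpw⟩
  have hflip : ∀ {u : List (Fin (A + 1))} {v : List (Fin (B + 1))},
      wprod Ol u ≠ wprod Og v → wprod Ol u = -wprod Og v := by
    intro u v h
    rcases wprod_eq_one_or_eq_neg_one hOl u with h₁ | h₁ <;>
      rcases wprod_eq_one_or_eq_neg_one hOg v with h₂ | h₂ <;> simp_all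
  refine ⟨p ++ q, p' ++ q, w ++ r, w' ++ r, by simpa using hne',
    (hsp.append hl hg hsq).mono (by linarith), (hsp'.append hl hg hsq).mono (by linarith),
    hcl'.append_right hlam hgam hOl hOg hPl hPg hPlD hPgD hsp (by linarith)
      (by simp only [ε₁]; linarith), ?_⟩
  rw [wprod_append, wprod_append, hflip hpw, hflip hqr]
  ring

lemma exists_closeSquares_two_pow_le_card (hlam : ∀ i, lam i ∈ Set.Ioo (0 : ℝ) 1)
    (hgam : ∀ j, gam j ∈ Set.Ioo (0 : ℝ) 1)
    (hOl : ∀ i, Ol i = 1 ∨ Ol i = -1) (hOg : ∀ j, Og j = 1 ∨ Og j = -1)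
    (hPl : IsCodingMap Ol lam bl Pl) (hPg : IsCodingMap Og gam bg Pg)
    (hPlD : ∀ ω ω', |Pl ω - Pl ω'| ≤ D) (hPgD : ∀ τ τ', |Pg τ - Pg τ'| ≤ D) (hD : 0 < D)
    (hyp : ExistsCloseSquarePair lam Ol gam Og Pl Pg D)
    (n : ℕ) : ∀ ε > (0 : ℝ), ∀ δ > (0 : ℝ),
      ∃ S, CloseSquares lam Ol gam Og Pl Pg D δ ε S ∧ 2 ^ n ≤ S.card := by
  have hl : ∀ i, 0 < lam i := fun i => (hlam i).1
  have hg : ∀ j, 0 < gam j := fun j => (hgam j).1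
  induction n with
  | zero =>
    intro ε hε δ hδ
    refine ⟨{([], [])}, ?_, by simp⟩
    simp only [CloseSquares, Finset.mem_singleton, forall_eq]
    exact ⟨isSq_nil hδ, relClose_refl hl hg hD hε _ _⟩
  | succ n ih =>
    intro ε hε δ hδ
    obtain ⟨S, hS, hcard⟩ := ih (ε / 8) (by positivity) (δ / 2) (by positivity)
    obtain ⟨Λ, hΛ, hΛS⟩ := S.exists_pos_forall_le
      (f := fun z => min (wprod lam z.1) (wprod gam z.2))
      fun z _ => lt_min (wprod_pos hl _) (wprod_pos hg _)
    have hev : ∀ᶠ η in 𝓝[>] (0 : ℝ), 0 < η ∧ η ≤ 1 / 4 ∧ η ≤ δ / 2 ∧ η ≤ ε * Λ / 24 ∧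
        (∀ i, lam i ≤ exp (-η)) ∧ ∀ j, gam j ≤ exp (-η) :=
      eventually_mem_nhdsWithin.and <| Filter.Eventually.filter_mono nhdsWithin_le_nhds <|
        (eventually_le_nhds (by norm_num)).and <| (eventually_le_nhds (by positivity)).and <|
        (eventually_le_nhds (by positivity)).and <|
        (eventually_forall_le_exp_neg fun i => (hlam i).2).and
        (eventually_forall_le_exp_neg fun j => (hgam j).2)
    obtain ⟨η, hη, hη4, hηδ, hηΛ, hηl, hηg⟩ := hev.exists
    obtain ⟨S₀, hS₀card, hS₀, horient⟩ :=
      exists_closeSquares_card_eq_two hlam hgam hOl hOg hPl hPg hPlD hPgD hD hyp hη hη4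
    refine ⟨Finset.image₂ pairAppend S₀ S,
      hS₀.image₂_pairAppend hlam hgam hOl hPl hPg hPlD hPgD horient hS
        (fun z hz => le_min_iff.1 (hΛS z hz)) hε.le hη4 hηδ (by linarith), ?_⟩
    rw [hS₀.card_image₂_pairAppend hlam hgam hηl hηg, hS₀card, pow_succ]
    omega

end Main

/-- The doubling Lemma 2.4: if for every `ε > 0` and `δ > 0` there exist two distinct
`ε`-relatively close `δ`-squares, then for every `ε > 0`, `δ > 0` and `N` there exist `N`
distinct pairwise `ε`-relatively close `δ`-squares. -/
theorem stmt16 (A B : ℕ)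
    (lam Ol bl : Fin (A + 1) → ℝ) (gam Og bg : Fin (B + 1) → ℝ)
    (hlam : ∀ i, lam i ∈ Set.Ioo (0:ℝ) 1) (hgam : ∀ j, gam j ∈ Set.Ioo (0:ℝ) 1)
    (hOl : ∀ i, Ol i = 1 ∨ Ol i = -1) (hOg : ∀ j, Og j = 1 ∨ Og j = -1)
    (Pl : (ℕ → Fin (A + 1)) → ℝ) (Pg : (ℕ → Fin (B + 1)) → ℝ)
    (hPl : ∀ ω, Pl ω = Ol (ω 0) * lam (ω 0) * Pl (fun n => ω (n + 1)) + bl (ω 0))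
    (hPg : ∀ τ, Pg τ = Og (τ 0) * gam (τ 0) * Pg (fun n => τ (n + 1)) + bg (τ 0))
    (D : ℝ) (hD : 0 < D)
    (hrl : ∀ ω, Pl ω ∈ Set.Icc 0 D) (hrg : ∀ τ, Pg τ ∈ Set.Icc 0 D)
    (hyp : ∀ ε > (0:ℝ), ∀ δ > (0:ℝ),
      ∃ (u1 u2 : List (Fin (A + 1))) (v1 v2 : List (Fin (B + 1))),
        (u1, v1) ≠ (u2, v2) ∧ IsSq lam gam δ u1 v1 ∧ IsSq lam gam δ u2 v2 ∧
        RelClose lam Ol gam Og Pl Pg D ε u1 v1 u2 v2) :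
    ∀ ε > (0:ℝ), ∀ δ > (0:ℝ), ∀ N : ℕ,
      ∃ p : Fin N → List (Fin (A + 1)) × List (Fin (B + 1)),
        Function.Injective p ∧
        (∀ i, IsSq lam gam δ (p i).1 (p i).2) ∧
        (∀ i j, i ≠ j →
          RelClose lam Ol gam Og Pl Pg D ε (p i).1 (p i).2 (p j).1 (p j).2) := by
  intro ε hε δ hδ N
  have hPlD : ∀ ω ω', |Pl ω - Pl ω'| ≤ D := fun ω ω' =>
    abs_sub_le_of_nonneg_of_le (hrl ω).1 (hrl ω).2 (hrl ω').1 (hrl ω').2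
  have hPgD : ∀ τ τ', |Pg τ - Pg τ'| ≤ D := fun τ τ' =>
    abs_sub_le_of_nonneg_of_le (hrg τ).1 (hrg τ).2 (hrg τ').1 (hrg τ').2
  obtain ⟨S, hS, hcard⟩ := exists_closeSquares_two_pow_le_card hlam hgam hOl hOg hPl hPg hPlD hPgD
    hD hyp N ε hε δ hδ
  have hN : N ≤ S.card := Nat.lt_two_pow_self.le.trans hcard
  let p : Fin N → S := fun i => S.equivFin.symm (Fin.castLE hN i)
  refine ⟨fun i => p i, fun i j hij => Fin.castLE_injective hN (S.equivFin.symm.injective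
    (Subtype.ext hij)), fun i => (hS _ (p i).2).1, fun i j _ => (hS _ (p i).2).2 _ (p j).2⟩
end
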